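/- Let A be the 2-dimensional complex associative algebra with basis {e₁, e₂}, nonzero products e₁·e₁ = e₁, e₂·e₂ = e₂ (all mixed products zero). Then the only solution of the AYBE in A⊗A is r = 0. -/
import Mathlib


open Finset in
def AYBE {n : ℕ} (mul : Fin n → Fin n → Fin n → ℂ) (r : Fin n → Fin n → ℂ) : Prop :=
  ∀ p q s : Fin n,
    (∑ i, ∑ k, r i q * r k s * mul i k p)
    + (∑ j, ∑ l, r p j * r q l * mul j l s)
    - (∑ i, ∑ l, r i s * r p l * mul i l q) = 0

/-- Structure constants of the 2-dimensional algebra with `e₁·e₁ = e₁`, `e₂·e₂ = e₂`,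
all mixed products zero. -/
def mulA7 : Fin 2 → Fin 2 → Fin 2 → ℂ := fun i j k =>
  if (i = 0 ∧ j = 0 ∧ k = 0) ∨ (i = 1 ∧ j = 1 ∧ k = 1) then 1 else 0

/-- For the algebra `e₁·e₁ = e₁, e₂·e₂ = e₂`, the only solution of the AYBE is `r = 0`. -/
theorem stmt_6 (r : Fin 2 → Fin 2 → ℂ) :
    AYBE mulA7 r ↔ ∀ i j : Fin 2, r i j = 0 := by
  constructor
  · intro h
    have h000 := h 0 0 0
    have h111 := h 1 1 1
    have h001 := h 0 0 1
    have h110 := h 1 1 0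
    simp [mulA7, Fin.sum_univ_two] at h000 h111 h001 h110
    have ha : r 0 0 = 0 := h000
    have hd : r 1 1 = 0 := h111
    have hb : r 0 1 = 0 := by
      have : r 0 1 * r 0 1 = 0 := by linear_combination h001
      exact mul_self_eq_zero.mp this
    have hc : r 1 0 = 0 := by
      have : r 1 0 * r 1 0 = 0 := by linear_combination h110
      exact mul_self_eq_zero.mp this
    intro i j
    fin_cases i <;> fin_cases j <;> assumption
  · intro h p q s
    simp [mulA7, Fin.sum_univ_two, h]
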